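/- arXiv:2108.06291 — 3 statements merged into one kernel-verified Lean document; each statement's English description precedes it below -/
import Mathlib

section
/- With h and τ on ℤ⁴ as above (type F₄), let ν = aω₁ + bω₂ + cω₃ + dω₄ with a,b,c,d ∈ ℕ. Suppose h(τν) < 18. Then: (1) if 2a + 2b + c = 0 then ν = dω₄ with d ≤ 8, and hence h(ν) ≤ 16, with h(ν) = 16 only for ν = 8ω₄; (2) if 2a + 2b + c = 1 then ν = ω₃ + dω₄ with d ≤ 6 and h(ν) ≤ 15; (3) if 2a + 2b + c ≥ 2 then h(ν) < 16. In all cases h(ν) ≤ 16 < 17. -/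
/-- Type F₄, p = 2: the key combinatorial step of Lemma 4.2. If ν is dominant and
h(τν) < 18, then h(ν) ≤ 16 < 17, with the sharper description in each case. -/
theorem F4_lemma42_combinatorics (τ : (ℤ × ℤ × ℤ × ℤ) →ₗ[ℤ] (ℤ × ℤ × ℤ × ℤ))
    (h4 : τ (0, 0, 0, 1) = (1, 0, 0, 0)) (h1 : τ (1, 0, 0, 0) = (0, 0, 0, 2))
    (h3 : τ (0, 0, 1, 0) = (0, 1, 0, 0)) (h2 : τ (0, 1, 0, 0) = (0, 0, 2, 0)) :
    let h : ℤ × ℤ × ℤ × ℤ → ℤ :=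
      fun p => 2 * p.1 + 4 * p.2.1 + 3 * p.2.2.1 + 2 * p.2.2.2
    ∀ a b c d : ℕ,
      h (τ ((a : ℤ), (b : ℤ), (c : ℤ), (d : ℤ))) < 18 →
      ((2 * a + 2 * b + c = 0 →
          a = 0 ∧ b = 0 ∧ c = 0 ∧ d ≤ 8 ∧
          h ((a : ℤ), (b : ℤ), (c : ℤ), (d : ℤ)) ≤ 16 ∧
          (h ((a : ℤ), (b : ℤ), (c : ℤ), (d : ℤ)) = 16 → d = 8)) ∧
       (2 * a + 2 * b + c = 1 →
          a = 0 ∧ b = 0 ∧ c = 1 ∧ d ≤ 6 ∧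
          h ((a : ℤ), (b : ℤ), (c : ℤ), (d : ℤ)) ≤ 15) ∧
       (2 ≤ 2 * a + 2 * b + c →
          h ((a : ℤ), (b : ℤ), (c : ℤ), (d : ℤ)) < 16) ∧
       (h ((a : ℤ), (b : ℤ), (c : ℤ), (d : ℤ)) ≤ 16 ∧ (16 : ℤ) < 17)) := by
  intro h a b c d hlt
  have key : τ ((a : ℤ), (b : ℤ), (c : ℤ), (d : ℤ)) = ((d : ℤ), (c : ℤ), 2 * (b:ℤ), 2 * (a:ℤ)) := by
    have : ((a : ℤ), (b : ℤ), (c : ℤ), (d : ℤ)) =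
        (a : ℤ) • ((1, 0, 0, 0) : ℤ × ℤ × ℤ × ℤ) + (b : ℤ) • (0, 1, 0, 0) +
        (c : ℤ) • (0, 0, 1, 0) + (d : ℤ) • (0, 0, 0, 1) := by
      simp [Prod.ext_iff]
    rw [this, map_add, map_add, map_add, map_smul, map_smul, map_smul, map_smul,
      h1, h2, h3, h4]
    simp [Prod.ext_iff]; ring_nf; simp [mul_comm]
  rw [key] at hlt
  simp only [h] at hlt ⊢
  -- hlt : 2*d + 4*c + 3*(2*b) + 2*(2*a) < 18
  have hlt' : 2 * (d : ℤ) + 4 * c + 6 * b + 4 * a < 18 := by linarith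
  have ha : (0:ℤ) ≤ a := Int.natCast_nonneg a
  have hb : (0:ℤ) ≤ b := Int.natCast_nonneg b
  have hc : (0:ℤ) ≤ c := Int.natCast_nonneg c
  have hd : (0:ℤ) ≤ d := Int.natCast_nonneg d
  refine ⟨?_, ?_, ?_, ?_, by norm_num⟩
  · intro h0
    have ha0 : a = 0 := by omega
    have hb0 : b = 0 := by omega
    have hc0 : c = 0 := by omega
    subst ha0 hb0 hc0
    have hd8 : d ≤ 8 := by
      have : (d : ℤ) < 9 := by linarith
      exact_mod_cast by omega
    refine ⟨rfl, rfl, rfl, hd8, by push_cast; omega, ?_⟩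
    intro h16
    push_cast at h16
    omega
  · intro h1'
    have ha0 : a = 0 := by omega
    have hb0 : b = 0 := by omega
    have hc1 : c = 1 := by omega
    subst ha0 hb0 hc1
    have hd6 : d ≤ 6 := by
      have : (d : ℤ) ≤ 6 := by push_cast at hlt' ⊢; omega
      exact_mod_cast this
    exact ⟨rfl, rfl, rfl, hd6, by push_cast at hlt' ⊢; omega⟩
  · intro h2'
    have : (2:ℤ) ≤ 2 * a + 2 * b + c := by exact_mod_cast h2'
    linarith
  · omega
end

section
/- Let X = ℤ², τ ℤ-linear with τ(ω₁)=ω₂, τ(ω₂)=2ω₁, and r = 2s+1 ≥ 1 odd. Every λ ∈ X_{r/2} := {aω₁ + bω₂ : 0 ≤ a < 2^{s+1}, 0 ≤ b < 2^s} has a unique expansion λ = Σ_{i=0}^{r-1} τ^i(λ_i) with each λ_i ∈ {0, ω₁}. -/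
private theorem C2_tau_aux (τ : Module.End ℤ (ℤ × ℤ))
    (h1 : τ (1, 0) = (0, 1)) (h2 : τ (0, 1) = (2, 0)) :
    ∀ r : ℕ, ∀ a b : ℤ, 0 ≤ a → a < 2 ^ ((r + 1) / 2) → 0 ≤ b → b < 2 ^ (r / 2) →
    ∃! f : Fin r → ℤ × ℤ,
      (∀ i, f i = 0 ∨ f i = (1, 0)) ∧
      (a, b) = ∑ i : Fin r, (τ ^ (i : ℕ)) (f i) := by
  have hτ : ∀ c d : ℤ, τ (c, d) = (2 * d, c) := by
    intro c d
    have h : ((c, d) : ℤ × ℤ) = c • ((1 : ℤ), (0 : ℤ)) + d • ((0 : ℤ), (1 : ℤ)) := by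
      simp [Prod.ext_iff]
    rw [h, map_add, map_smul, map_smul, h1, h2]
    simp [Prod.ext_iff, mul_comm]
  intro r
  induction r with
  | zero =>
    intro a b ha0 ha hb0 hb
    have ha' : a = 0 := by norm_num at ha; omega
    have hb' : b = 0 := by norm_num at hb; omega
    subst ha' hb'
    refine ⟨fun _ => 0, ⟨fun i => Or.inl rfl, by simp⟩, ?_⟩
    intro f' _
    funext i
    exact i.elim0
  | succ r ih =>
    intro a b ha0 ha hb0 hb
    have hdiv : (r + 1 + 1) / 2 = r / 2 + 1 := by omega
    rw [hdiv, pow_succ] at ha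
    have ha' : a / 2 < 2 ^ (r / 2) := by omega
    have ha0' : 0 ≤ a / 2 := by omega
    obtain ⟨g, ⟨hg1, hg2⟩, hgu⟩ := ih b (a / 2) hb0 hb ha0' ha'
    set x : ℤ × ℤ := if a % 2 = 1 then ((1 : ℤ), (0 : ℤ)) else 0 with hxdef
    have hx : x = (a % 2, 0) := by
      have := Int.emod_two_eq a
      rw [hxdef]
      split_ifs with h
      · rw [h]
      · rcases this with h' | h'
        · rw [h']; rfl
        · exact absurd h' h
    have hsum : ∀ f : Fin (r + 1) → ℤ × ℤ,
        (∑ i : Fin (r + 1), (τ ^ (i : ℕ)) (f i)) =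
          f 0 + τ (∑ i : Fin r, (τ ^ (i : ℕ)) (f i.succ)) := by
      intro f
      rw [Fin.sum_univ_succ, map_sum]
      simp only [Fin.val_succ, pow_succ', Module.End.mul_apply, Fin.val_zero, pow_zero,
        Module.End.one_apply]
    refine ⟨Fin.cons x g, ⟨?_, ?_⟩, ?_⟩
    · intro i
      refine Fin.cases ?_ ?_ i
      · rw [Fin.cons_zero, hxdef]
        split_ifs
        · exact Or.inr rfl
        · exact Or.inl rfl
      · intro j
        rw [Fin.cons_succ]
        exact hg1 j
    · rw [hsum]
      simp only [Fin.cons_zero, Fin.cons_succ]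
      rw [← hg2, hτ, hx, Prod.ext_iff]
      constructor
      · simp; omega
      · simp
    · intro f' ⟨hf1, hf2⟩
      rw [hsum] at hf2
      set S : ℤ × ℤ := ∑ i : Fin r, (τ ^ (i : ℕ)) (f' i.succ) with hSdef
      have hS : τ S = (2 * S.2, S.1) := hτ S.1 S.2
      rw [hS] at hf2
      have hf'0 : f' 0 = (a % 2, 0) ∧ S.1 = b ∧ S.2 = a / 2 := by
        rcases hf1 0 with h0 | h0 <;> rw [h0] at hf2 <;>
          simp [Prod.ext_iff] at hf2 <;>
          exact ⟨by rw [h0, Prod.ext_iff]; constructor <;> simp <;> omega,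
            by omega, by omega⟩
      obtain ⟨h0, hS1, hS2⟩ := hf'0
      have hg' : (fun i => f' i.succ) = g := by
        apply hgu
        refine ⟨fun i => hf1 i.succ, ?_⟩
        rw [← hSdef, Prod.ext_iff]
        exact ⟨hS1.symm, hS2.symm⟩
      funext i
      refine Fin.cases ?_ ?_ i
      · rw [Fin.cons_zero, h0, hx]
      · intro j
        rw [Fin.cons_succ, ← hg']
        
/-- Type C₂, p = 2: τ-adic expansion. Every λ ∈ X_{r/2} (r = 2s+1 odd) has a unique
expansion λ = Σ_{i=0}^{r-1} τ^i(λ_i) with each λ_i ∈ {0, ω₁}. -/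
theorem C2_tau_adic_expansion (τ : Module.End ℤ (ℤ × ℤ))
    (h1 : τ (1, 0) = (0, 1)) (h2 : τ (0, 1) = (2, 0))
    (s : ℕ) (r : ℕ) (hr : r = 2 * s + 1) (a b : ℤ)
    (ha0 : 0 ≤ a) (ha : a < 2 ^ (s + 1)) (hb0 : 0 ≤ b) (hb : b < 2 ^ s) :
    ∃! f : Fin r → ℤ × ℤ,
      (∀ i, f i = 0 ∨ f i = (1, 0)) ∧
      (a, b) = ∑ i : Fin r, (τ ^ (i : ℕ)) (f i) := by
  subst hr
  have e1 : (2 * s + 1 + 1) / 2 = s + 1 := by omega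
  have e2 : (2 * s + 1) / 2 = s := by omega
  exact C2_tau_aux τ h1 h2 (2 * s + 1) a b ha0 (by rw [e1]; exact ha) hb0 (by rw [e2]; exact hb)
end

section
/- Let X = ℤ⁴ (type F₄) and τ ℤ-linear with τ(ω₄)=ω₁, τ(ω₁)=2ω₄, τ(ω₃)=ω₂, τ(ω₂)=2ω₃, and let r = 2s+1 ≥ 1 be odd. Every λ = aω₁+bω₂+cω₃+dω₄ with 0 ≤ a,b < 2^s and 0 ≤ c,d < 2^{s+1} has a unique expansion λ = Σ_{i=0}^{r-1} τ^i(λ_i) with each λ_i ∈ {0, ω₃, ω₄, ω₃+ω₄}. -/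
/-!
Write `τ (a, b, c, d) = (d, c, 2b, 2a)`. Every weight `λ = (a, b, c, d)` splits uniquely as
`λ = λ₀ + τ μ` with `λ₀ = (0, 0, c mod 2, d mod 2)` a τ-restricted weight and
`μ = (⌊d/2⌋, ⌊c/2⌋, b, a)`. Passing from `λ` to `μ` maps the τ^(n+1)-restricted weights to the
τ^n-restricted ones: the halved short coordinates of `λ` become the long ones of `μ`, and its long
coordinates become the short ones.
Induction on the number of digits gives existence, and uniqueness since `τ` is injective.
-/

open Finset

theorem Module.End.sum_fin_succ_pow_apply {R M : Type*} [Semiring R] [AddCommMonoid M]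
    [Module R M] (τ : Module.End R M) {n : ℕ} (f : Fin (n + 1) → M) :
    ∑ i : Fin (n + 1), (τ ^ (i : ℕ)) (f i) = f 0 + τ (∑ i : Fin n, (τ ^ (i : ℕ)) (f i.succ)) := by
  simp only [Fin.sum_univ_succ, Fin.val_zero, pow_zero, Module.End.one_apply, Fin.val_succ,
    pow_succ', Module.End.mul_apply, map_sum]

def IsTauDigit (v : ℤ × ℤ × ℤ × ℤ) : Prop :=
  v = 0 ∨ v = (0, 0, 1, 0) ∨ v = (0, 0, 0, 1) ∨ v = (0, 0, 1, 1)

theorem isTauDigit_parity (c d : ℤ) : IsTauDigit (0, 0, c % 2, d % 2) := by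
  rcases Int.emod_two_eq_zero_or_one c with hc | hc <;>
    rcases Int.emod_two_eq_zero_or_one d with hd | hd <;> simp [IsTauDigit, hc, hd]

theorem apply_eq_of_basis {τ : Module.End ℤ (ℤ × ℤ × ℤ × ℤ)}
    (h4 : τ (0, 0, 0, 1) = (1, 0, 0, 0)) (h1 : τ (1, 0, 0, 0) = (0, 0, 0, 2))
    (h3 : τ (0, 0, 1, 0) = (0, 1, 0, 0)) (h2 : τ (0, 1, 0, 0) = (0, 0, 2, 0))
    (v : ℤ × ℤ × ℤ × ℤ) : τ v = (v.2.2.2, v.2.2.1, 2 * v.2.1, 2 * v.1) := by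
  obtain ⟨a, b, c, d⟩ := v
  have hv : ((a, b, c, d) : ℤ × ℤ × ℤ × ℤ) =
      a • (1, 0, 0, 0) + b • (0, 1, 0, 0) + c • (0, 0, 1, 0) + d • (0, 0, 0, 1) := by
    simp
  rw [hv]
  simp only [map_add, map_smul, h1, h2, h3, h4]
  simp [mul_comm]

section

variable {τ : Module.End ℤ (ℤ × ℤ × ℤ × ℤ)}
  (hτ : ∀ v : ℤ × ℤ × ℤ × ℤ, τ v = (v.2.2.2, v.2.2.1, 2 * v.2.1, 2 * v.1))
include hτ

/-- The short coordinates of `τ x` are even, so `u` is the parity vector of those of `u + τ x`. -/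
theorem eq_of_isTauDigit_add_apply {u v x y : ℤ × ℤ × ℤ × ℤ} (hu : IsTauDigit u)
    (hv : IsTauDigit v) (h : u + τ x = v + τ y) : u = v ∧ x = y := by
  obtain ⟨x₁, x₂, x₃, x₄⟩ := x
  obtain ⟨y₁, y₂, y₃, y₄⟩ := y
  rw [hτ, hτ] at h
  rcases hu with rfl | rfl | rfl | rfl <;> rcases hv with rfl | rfl | rfl | rfl <;>
    simp only [Prod.ext_iff, Prod.fst_add, Prod.snd_add, Prod.fst_zero, Prod.snd_zero,
      true_and] at h ⊢ <;>
    omega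

theorem tau_expansion_injective {n : ℕ} {f g : Fin n → ℤ × ℤ × ℤ × ℤ}
    (hf : ∀ i, IsTauDigit (f i)) (hg : ∀ i, IsTauDigit (g i))
    (h : ∑ i : Fin n, (τ ^ (i : ℕ)) (f i) = ∑ i : Fin n, (τ ^ (i : ℕ)) (g i)) : f = g := by
  induction n with
  | zero => exact funext fun i => i.elim0
  | succ n ih =>
    rw [τ.sum_fin_succ_pow_apply, τ.sum_fin_succ_pow_apply] at h
    obtain ⟨h0, htail⟩ := eq_of_isTauDigit_add_apply hτ (hf 0) (hg 0) h
    have hsucc := ih (fun i => hf i.succ) (fun i => hg i.succ) htail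
    funext i
    exact Fin.cases h0 (fun i => congrFun hsucc i) i

theorem exists_tau_expansion (n : ℕ) (a b c d : ℤ) (ha0 : 0 ≤ a) (ha : a < 2 ^ (n / 2))
    (hb0 : 0 ≤ b) (hb : b < 2 ^ (n / 2)) (hc0 : 0 ≤ c) (hc : c < 2 ^ ((n + 1) / 2))
    (hd0 : 0 ≤ d) (hd : d < 2 ^ ((n + 1) / 2)) :
    ∃ f : Fin n → ℤ × ℤ × ℤ × ℤ,
      (∀ i, IsTauDigit (f i)) ∧ (a, b, c, d) = ∑ i : Fin n, (τ ^ (i : ℕ)) (f i) := by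
  induction n generalizing a b c d with
  | zero =>
    refine ⟨Fin.elim0, fun i => i.elim0, ?_⟩
    simp only [Nat.zero_div, pow_zero] at ha hb hc hd
    simp only [univ_eq_empty, sum_empty, Prod.ext_iff, Prod.fst_zero, Prod.snd_zero]
    omega
  | succ n ih =>
    have hpow : (2 : ℤ) ^ ((n + 1 + 1) / 2) = 2 * 2 ^ (n / 2) := by
      rw [show (n + 1 + 1) / 2 = n / 2 + 1 by omega, pow_succ']
    obtain ⟨g, hg, hsum⟩ := ih (d / 2) (c / 2) b a (by omega) (by omega) (by omega) (by omega)
      hb0 hb ha0 ha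
    refine ⟨Fin.cons (0, 0, c % 2, d % 2) g, Fin.cases (isTauDigit_parity c d) hg, ?_⟩
    rw [τ.sum_fin_succ_pow_apply]
    simp only [Fin.cons_zero, Fin.cons_succ, ← hsum, hτ, Prod.ext_iff, Prod.fst_add, Prod.snd_add]
    omega

end

/-- Type F₄, p = 2: τ-adic expansion. Every τ^r-restricted weight (r = 2s+1 odd) has a
unique expansion λ = Σ_{i=0}^{r-1} τ^i(λ_i) with each λ_i ∈ {0, ω₃, ω₄, ω₃+ω₄}. -/
theorem F4_tau_adic_expansion (τ : Module.End ℤ (ℤ × ℤ × ℤ × ℤ))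
    (h4 : τ (0, 0, 0, 1) = (1, 0, 0, 0)) (h1 : τ (1, 0, 0, 0) = (0, 0, 0, 2))
    (h3 : τ (0, 0, 1, 0) = (0, 1, 0, 0)) (h2 : τ (0, 1, 0, 0) = (0, 0, 2, 0))
    (s : ℕ) (r : ℕ) (hr : r = 2 * s + 1) (a b c d : ℤ)
    (ha0 : 0 ≤ a) (ha : a < 2 ^ s) (hb0 : 0 ≤ b) (hb : b < 2 ^ s)
    (hc0 : 0 ≤ c) (hc : c < 2 ^ (s + 1)) (hd0 : 0 ≤ d) (hd : d < 2 ^ (s + 1)) :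
    ∃! f : Fin r → ℤ × ℤ × ℤ × ℤ,
      (∀ i, f i = 0 ∨ f i = (0, 0, 1, 0) ∨ f i = (0, 0, 0, 1) ∨ f i = (0, 0, 1, 1)) ∧
      (a, b, c, d) = ∑ i : Fin r, (τ ^ (i : ℕ)) (f i) := by
  have hτ := apply_eq_of_basis h4 h1 h3 h2
  have hlong : r / 2 = s := by omega
  have hshort : (r + 1) / 2 = s + 1 := by omega
  obtain ⟨f, hf, hsum⟩ := exists_tau_expansion hτ r a b c d ha0 (hlong ▸ ha) hb0 (hlong ▸ hb)
    hc0 (hshort ▸ hc) hd0 (hshort ▸ hd)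
  exact ⟨f, ⟨hf, hsum⟩, fun g ⟨hg, hgsum⟩ =>
    tau_expansion_injective hτ hg hf (hgsum.symm.trans hsum)⟩
end
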